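/- Phase-two insertion (first insertion of phase two of Ψ): Let A ⊂ ℤ be a nonempty finite set, let f be a parking function on A with secdinv(f) = 0, let x ∈ ℤ with x ∉ A, set d = maxdiag(f) + 1, and let c be a nonnegative integer such that there exists a label y ∈ A with diag_f(y) = d − 1, col_f(y) > c, and y < x. Then the (c,d)-insertion h of x into f is a parking function on A ∪ {x} with secdinv(h) = 0 and diag_h(x) = d. -/

import Mathlib

/-!
Parking functions on a finite set of integer labels `A ⊆ ℤ`.
A parking function on `A` (with `|A| = m`) is encoded as a function `f : ℤ → ℕ`
which is `0` off `A`, takes values in `{1,…,m}` on `A`, and satisfies the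
parking condition: for every `1 ≤ k ≤ m`, `|{a ∈ A : f a ≤ k}| ≥ k`.
-/

/-- The row of label `a`: the number of labels in strictly smaller columns, plus
the number of labels in the same column that are `≤ a`. -/
def pfRow (A : Finset ℤ) (f : ℤ → ℕ) (a : ℤ) : ℕ :=
  (A.filter fun b => f b < f a).card + (A.filter fun b => f b = f a ∧ b ≤ a).card

/-- The diagonal of label `a`: its row minus its column (the column of `a` is `f a`). -/
def pfDiag (A : Finset ℤ) (f : ℤ → ℕ) (a : ℤ) : ℤ :=
  (pfRow A f a : ℤ) - (f a : ℤ)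

/-- `f : ℤ → ℕ` encodes a parking function on the finite label set `A ⊆ ℤ`. -/
def IsParkingOn (A : Finset ℤ) (f : ℤ → ℕ) : Prop :=
  (∀ a ∈ A, 1 ≤ f a ∧ f a ≤ A.card) ∧
  (∀ a, a ∉ A → f a = 0) ∧
  ∀ k : ℕ, 1 ≤ k → k ≤ A.card → k ≤ (A.filter fun a => f a ≤ k).card

/-- The number of secondary dinv pairs `(a, b)`: pairs with `a < b`,
`diag a = diag b - 1` and `col a > col b`. -/
def secdinv (A : Finset ℤ) (f : ℤ → ℕ) : ℕ :=
  ((A ×ˢ A).filter fun p =>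
    p.1 < p.2 ∧ pfDiag A f p.1 = pfDiag A f p.2 - 1 ∧ f p.2 < f p.1).card

/-- The set of parking functions on `A` with zero secondary dinv. -/
def PFZ (A : Finset ℤ) : Set (ℤ → ℕ) :=
  {f | IsParkingOn A f ∧ secdinv A f = 0}

/-- `pfz n`: the number of parking functions of length `n` (on `{1,…,n}`)
with zero secondary dinv. -/
noncomputable def pfz (n : ℕ) : ℕ := Nat.card (PFZ (Finset.Icc 1 (n : ℤ)))

/-- Insertion `Γ(f, x, k)` of a new label `x` into `f` at column `k`:
`x` gets column `k`; labels in columns `< k` (or in column `k` and smaller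
than `x`) keep their column; the others shift one column to the right. -/
def insertPF (f : ℤ → ℕ) (x : ℤ) (k : ℕ) : ℤ → ℕ := fun a =>
  if a = x then k
  else if f a < k ∨ (f a = k ∧ a < x) then f a
  else f a + 1

/-- The `(c,d)`-insertion of `x ∉ A` into a parking function `f` on `A`:
among the labels `y ∈ A` on diagonal `d - 1` with column `> c` and `y < x`
(these are `y_1, …, y_{ℓ*}` in the paper's notation), take the one with the
largest column; insert `x` at that column (i.e. `Γ(f, x, col(y_{ℓ*}))`), or at
column `c + 1` if there is no such label (`ℓ* = 0`). -/
def specialInsert (A : Finset ℤ) (f : ℤ → ℕ) (x : ℤ) (c : ℕ) (d : ℤ) : ℤ → ℕ :=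
  let T := A.filter fun y => pfDiag A f y = d - 1 ∧ c < f y ∧ y < x
  insertPF f x (if T.Nonempty then T.sup f else c + 1)

/-!
The candidate `y` of largest column `k` has the maximal diagonal `d - 1`, so it is the top label
of column `k` (a label above it would lie on a higher diagonal). Every label of that column is
therefore below `x`, and `x`, inserted in column `k`, lands directly above `y`, on diagonal `d`.
On `A` the insertion only shifts the columns beyond `k` by one, carrying their labels along, so
diagonals and the order of columns are unchanged and `f` contributes no secondary dinv pair.
A new pair would involve `x`: a partner on diagonal `d + 1` does not exist, and a partner `a < x`
on diagonal `d - 1` in a column beyond `k` would be a candidate to the right of the maximal one.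
-/

def colShift (k v : ℕ) : ℕ := v + if k < v then 1 else 0

theorem le_colShift (k v : ℕ) : v ≤ colShift k v := Nat.le_add_right v _

theorem colShift_of_le {k v : ℕ} (h : v ≤ k) : colShift k v = v := by simp [colShift, h]

theorem colShift_strictMono (k : ℕ) : StrictMono (colShift k) := by
  intro v w hvw
  simp only [colShift]
  split_ifs <;> omega

theorem pfRow_congr {A : Finset ℤ} {f g : ℤ → ℕ} {a b : ℤ}
    (hlt : ∀ c ∈ A, g c < g b ↔ f c < f a)
    (heq : ∀ c ∈ A, g c = g b ∧ c ≤ b ↔ f c = f a ∧ c ≤ a) :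
    pfRow A g b = pfRow A f a := by
  unfold pfRow
  rw [Finset.filter_congr hlt, Finset.filter_congr heq]

theorem pfRow_insert {A : Finset ℤ} {x : ℤ} (hx : x ∉ A) (g : ℤ → ℕ) (a : ℤ) :
    pfRow (insert x A) g a = pfRow A g a + (if g x < g a then 1 else 0) +
      (if g x = g a ∧ x ≤ a then 1 else 0) := by
  unfold pfRow
  rw [Finset.filter_insert, Finset.filter_insert]
  split_ifs <;> simp [Finset.card_insert_of_notMem, hx] <;> omega

theorem pfRow_lt_pfRow {A : Finset ℤ} {f : ℤ → ℕ} {a b : ℤ} (hb : b ∈ A) (hab : a < b)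
    (hf : f a = f b) : pfRow A f a < pfRow A f b := by
  unfold pfRow
  rw [hf]
  have hsub : (A.filter fun c => f c = f b ∧ c ≤ a) ⊂ A.filter fun c => f c = f b ∧ c ≤ b := by
    refine Finset.ssubset_iff_of_subset ?_ |>.mpr ⟨b, ?_, ?_⟩
    · exact Finset.monotone_filter_right A fun c _ hc => ⟨hc.1, hc.2.trans hab.le⟩
    · simp [hb]
    · simp [hab]
  have := Finset.card_lt_card hsub
  omega

theorem pfDiag_lt_pfDiag {A : Finset ℤ} {f : ℤ → ℕ} {a b : ℤ} (hb : b ∈ A) (hab : a < b)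
    (hf : f a = f b) : pfDiag A f a < pfDiag A f b := by
  have := pfRow_lt_pfRow hb hab hf
  unfold pfDiag
  omega

theorem le_of_pfDiag_le {A : Finset ℤ} {f : ℤ → ℕ} {y b : ℤ}
    (hmax : ∀ a ∈ A, pfDiag A f a ≤ pfDiag A f y) (hb : b ∈ A) (hf : f b = f y) : b ≤ y := by
  by_contra! hyb
  exact (pfDiag_lt_pfDiag hb hyb hf.symm).not_ge (hmax b hb)

theorem secdinv_eq_zero_iff {A : Finset ℤ} {f : ℤ → ℕ} :
    secdinv A f = 0 ↔ ∀ a ∈ A, ∀ b ∈ A, a < b → pfDiag A f a = pfDiag A f b - 1 → f a ≤ f b := by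
  simp only [secdinv, Finset.card_eq_zero, Finset.filter_eq_empty_iff, Finset.mem_product,
    Prod.forall, not_and, not_lt]
  exact ⟨fun h a ha b hb => h a b ⟨ha, hb⟩, fun h a b hab => h a hab.1 b hab.2⟩

section insertPF

variable {A : Finset ℤ} {f : ℤ → ℕ} {x : ℤ} {k : ℕ}

@[simp]
theorem insertPF_self : insertPF f x k x = k := by simp [insertPF]

theorem insertPF_of_lt {a : ℤ} (hax : a ≠ x) (h : f a < k) : insertPF f x k a = f a := by
  simp [insertPF, hax, h]

theorem insertPF_eq_or_eq_succ {a : ℤ} (hax : a ≠ x) :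
    insertPF f x k a = f a ∨ insertPF f x k a = f a + 1 := by
  unfold insertPF
  split_ifs <;> omega

theorem isParkingOn_insertPF (hf : IsParkingOn A f) (hx : x ∉ A) (hk1 : 1 ≤ k)
    (hk : k ≤ A.card + 1) : IsParkingOn (insert x A) (insertPF f x k) := by
  obtain ⟨hrange, hzero, hpark⟩ := hf
  unfold IsParkingOn
  rw [Finset.card_insert_of_notMem hx]
  refine ⟨fun a ha => ?_, fun a ha => ?_, fun j hj1 hj => ?_⟩
  · rcases Finset.mem_insert.mp ha with rfl | ha
    · simp [hk1, hk]
    · have := hrange a ha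
      have := insertPF_eq_or_eq_succ (f := f) (k := k) (ne_of_mem_of_not_mem ha hx)
      omega
  · rw [Finset.mem_insert, not_or] at ha
    rw [insertPF_of_lt ha.1 (by rw [hzero a ha.2]; omega), hzero a ha.2]
  · rcases lt_or_ge j k with hjk | hkj
    · calc j ≤ (A.filter fun a => f a ≤ j).card := hpark j hj1 (by omega)
        _ ≤ _ := Finset.card_le_card fun a ha => by
          rw [Finset.mem_filter] at ha ⊢
          refine ⟨Finset.mem_insert_of_mem ha.1, ?_⟩
          rw [insertPF_of_lt (ne_of_mem_of_not_mem ha.1 hx) (by omega)]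
          exact ha.2
    · have hprev : j - 1 ≤ (A.filter fun a => f a ≤ j - 1).card := by
        rcases Nat.eq_or_lt_of_le hj1 with rfl | hj2
        · exact Nat.zero_le _
        · exact hpark (j - 1) (by omega) (by omega)
      have hxf : x ∉ A.filter fun a => f a ≤ j - 1 := fun h => hx (Finset.mem_filter.mp h).1
      calc j ≤ (insert x (A.filter fun a => f a ≤ j - 1)).card := by
            rw [Finset.card_insert_of_notMem hxf]
            omega
        _ ≤ _ := Finset.card_le_card fun a ha => by
          rcases Finset.mem_insert.mp ha with rfl | ha
          · simp [hkj]
          · rw [Finset.mem_filter] at ha ⊢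
            have := insertPF_eq_or_eq_succ (f := f) (k := k) (ne_of_mem_of_not_mem ha.1 hx)
            exact ⟨Finset.mem_insert_of_mem ha.1, by omega⟩

theorem insertPF_eq_colShift (hx : x ∉ A) (hcol : ∀ b ∈ A, f b = k → b < x) {a : ℤ}
    (ha : a ∈ A) : insertPF f x k a = colShift k (f a) := by
  have := hcol a ha
  unfold insertPF colShift
  rw [if_neg (ne_of_mem_of_not_mem ha hx)]
  split_ifs <;> omega

theorem pfDiag_insertPF_of_mem (hx : x ∉ A) (hcol : ∀ b ∈ A, f b = k → b < x) {a : ℤ}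
    (ha : a ∈ A) : pfDiag (insert x A) (insertPF f x k) a = pfDiag A f a := by
  have hrow : pfRow A (insertPF f x k) a = pfRow A f a := by
    refine pfRow_congr (fun b hb => ?_) (fun b hb => ?_) <;>
      rw [insertPF_eq_colShift hx hcol hb, insertPF_eq_colShift hx hcol ha]
    · exact (colShift_strictMono k).lt_iff_lt
    · rw [(colShift_strictMono k).injective.eq_iff]
  have := hcol a ha
  unfold pfDiag
  rw [pfRow_insert hx, hrow, insertPF_self, insertPF_eq_colShift hx hcol ha]
  unfold colShift
  split_ifs <;> push_cast <;> omega

theorem pfDiag_insertPF_self (hx : x ∉ A) (hcol : ∀ b ∈ A, f b = k → b < x) {y : ℤ}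
    (hyk : f y = k) (htop : ∀ b ∈ A, f b = k → b ≤ y) :
    pfDiag (insert x A) (insertPF f x k) x = pfDiag A f y + 1 := by
  have hrow : pfRow A (insertPF f x k) x = pfRow A f y := by
    refine pfRow_congr (fun b hb => ?_) (fun b hb => ?_) <;>
      have := hcol b hb <;> have := htop b hb <;>
      rw [insertPF_eq_colShift hx hcol hb, insertPF_self, hyk] <;> unfold colShift <;>
      split_ifs <;> omega
  unfold pfDiag
  rw [pfRow_insert hx, hrow, insertPF_self, hyk]
  simp only [lt_irrefl, if_false, le_refl, and_self, if_true]
  push_cast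
  ring

theorem secdinv_insertPF_eq_zero (hx : x ∉ A) (hcol : ∀ b ∈ A, f b = k → b < x)
    (hsd : secdinv A f = 0) {d : ℤ} (hdx : pfDiag (insert x A) (insertPF f x k) x = d)
    (hbelow : ∀ a ∈ A, a < x → pfDiag A f a = d - 1 → f a ≤ k)
    (habove : ∀ b ∈ A, x < b → pfDiag A f b = d + 1 → k ≤ f b) :
    secdinv (insert x A) (insertPF f x k) = 0 := by
  rw [secdinv_eq_zero_iff] at hsd ⊢
  intro a ha' b hb' hab hdiag
  rcases Finset.mem_insert.mp ha' with rfl | ha <;> rcases Finset.mem_insert.mp hb' with rfl | hb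
  · exact absurd hab (lt_irrefl _)
  · rw [hdx, pfDiag_insertPF_of_mem hx hcol hb] at hdiag
    rw [insertPF_self, insertPF_eq_colShift hx hcol hb]
    exact (habove b hb hab (by omega)).trans (le_colShift k (f b))
  · rw [hdx, pfDiag_insertPF_of_mem hx hcol ha] at hdiag
    rw [insertPF_self, insertPF_eq_colShift hx hcol ha]
    have hak := hbelow a ha hab hdiag
    exact (colShift_of_le hak).trans_le hak
  · rw [pfDiag_insertPF_of_mem hx hcol ha, pfDiag_insertPF_of_mem hx hcol hb] at hdiag
    rw [insertPF_eq_colShift hx hcol ha, insertPF_eq_colShift hx hcol hb]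
    exact (colShift_strictMono k).monotone (hsd a ha b hb hab hdiag)

end insertPF

theorem phaseTwoInsert_secdinv_general (A : Finset ℤ) (f : ℤ → ℕ)
    (hpf : IsParkingOn A f) (hsd : secdinv A f = 0)
    (x : ℤ) (hx : x ∉ A) (c : ℕ) (d : ℤ)
    (hd : (∀ a ∈ A, pfDiag A f a ≤ d - 1) ∧ ∃ a ∈ A, pfDiag A f a = d - 1)
    (hy : ∃ y ∈ A, pfDiag A f y = d - 1 ∧ c < f y ∧ y < x) :
    IsParkingOn (insert x A) (specialInsert A f x c d) ∧
      secdinv (insert x A) (specialInsert A f x c d) = 0 ∧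
      pfDiag (insert x A) (specialInsert A f x c d) x = d := by
  set T := A.filter fun y => pfDiag A f y = d - 1 ∧ c < f y ∧ y < x
  have hT : T.Nonempty := by
    obtain ⟨y, hyA, hyT⟩ := hy
    exact ⟨y, Finset.mem_filter.mpr ⟨hyA, hyT⟩⟩
  obtain ⟨y, hyT, hsup⟩ := Finset.exists_mem_eq_sup T hT f
  obtain ⟨hyA, hyd, hyc, hyx⟩ := Finset.mem_filter.mp hyT
  have hins : specialInsert A f x c d = insertPF f x (f y) := by
    simp only [specialInsert]
    rw [if_pos hT, hsup]
  rw [hins]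
  have htop : ∀ b ∈ A, f b = f y → b ≤ y :=
    fun b hb => le_of_pfDiag_le (fun a ha => hyd ▸ hd.1 a ha) hb
  have hcol : ∀ b ∈ A, f b = f y → b < x := fun b hb hby => (htop b hb hby).trans_lt hyx
  have hdx : pfDiag (insert x A) (insertPF f x (f y)) x = d := by
    rw [pfDiag_insertPF_self hx hcol rfl htop, hyd]
    ring
  have hk : f y ≤ A.card + 1 := (hpf.1 y hyA).2.trans (Nat.le_succ _)
  refine ⟨isParkingOn_insertPF hpf hx (hpf.1 y hyA).1 hk,
    secdinv_insertPF_eq_zero hx hcol hsd hdx (fun a ha hax had => ?_)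
      (fun b hb _ hbd => absurd (hd.1 b hb) (by omega)), hdx⟩
  by_contra! hya
  exact hya.not_ge (hsup ▸ Finset.le_sup (Finset.mem_filter.mpr ⟨ha, had, hyc.trans hya, hax⟩))

/-- Phase-two insertion: let `f` be a parking function on a nonempty `A` with
`secdinv f = 0`, `x ∉ A`, `d = maxdiag f + 1` (expressed by `hd`), and `c` a
nonnegative integer such that some label `y ∈ A` has diagonal `d − 1`,
column `> c`, and `y < x`. Then the `(c,d)`-insertion `h` of `x` into `f` is a
parking function on `A ∪ {x}` with `secdinv h = 0` and `diag_h x = d`. -/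
theorem phaseTwoInsert_secdinv (A : Finset ℤ) (hA : A.Nonempty) (f : ℤ → ℕ)
    (hpf : IsParkingOn A f) (hsd : secdinv A f = 0)
    (x : ℤ) (hx : x ∉ A) (c : ℕ) (d : ℤ)
    (hd : (∀ a ∈ A, pfDiag A f a ≤ d - 1) ∧ ∃ a ∈ A, pfDiag A f a = d - 1)
    (hy : ∃ y ∈ A, pfDiag A f y = d - 1 ∧ c < f y ∧ y < x) :
    IsParkingOn (insert x A) (specialInsert A f x c d) ∧
      secdinv (insert x A) (specialInsert A f x c d) = 0 ∧
      pfDiag (insert x A) (specialInsert A f x c d) x = d :=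
  phaseTwoInsert_secdinv_general A f hpf hsd x hx c d hd hy
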